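/- Let n ≥ 1 and let k_1,…,k_n be positive integers. Then ∑_{σ ∈ S_n} ζ_𝒜(k_{σ(1)},…,k_{σ(n)}) = 0 in 𝒜, where the sum runs over all permutations σ of {1,…,n}. -/

import Mathlib

open scoped BigOperators

/-- The product of `ℤ/pℤ` over all primes `p`. -/
abbrev PreA : Type := ∀ p : Nat.Primes, ZMod p

/-- The ideal of families that vanish for all but finitely many primes. -/
def nullIdeal : Ideal PreA where
  carrier := {f | {p | f p ≠ 0}.Finite}
  zero_mem' := by simp
  add_mem' := by
    intro f g hf hg
    refine (hf.union hg).subset fun p hp => ?_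
    by_contra hc
    simp only [Set.mem_union, Set.mem_setOf_eq, not_or, not_not] at hc
    exact hp (by simp [Set.mem_setOf_eq, hc.1, hc.2])
  smul_mem' := by
    intro c f hf
    refine hf.subset fun p hp => ?_
    simp only [Set.mem_setOf_eq] at hp ⊢
    intro h0
    exact hp (by simp [h0])

/-- The ring `𝒜 = (∏_p ℤ/pℤ)/(⊕_p ℤ/pℤ)`. -/
abbrev A : Type := PreA ⧸ nullIdeal

/-- `zetaSum p ks b` is `∑_{b > m₁ > ⋯ > m_n ≥ 1} ∏ mᵢ^{-kᵢ}` in `ℤ/pℤ`. -/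
def zetaSum (p : ℕ) : List ℕ → ℕ → ZMod p
  | [], _ => 1
  | k :: ks, b => ∑ m ∈ Finset.Ico 1 b, ((m : ZMod p)⁻¹) ^ k * zetaSum p ks m

/-- `zetaStarSum p ks b` is `∑_{b > m₁ ≥ ⋯ ≥ m_n ≥ 1} ∏ mᵢ^{-kᵢ}` in `ℤ/pℤ`. -/
def zetaStarSum (p : ℕ) : List ℕ → ℕ → ZMod p
  | [], _ => 1
  | k :: ks, b => ∑ m ∈ Finset.Ico 1 b, ((m : ZMod p)⁻¹) ^ k * zetaStarSum p ks (m + 1)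

/-- The finite multiple zeta value `ζ_𝒜(k₁,…,k_n)`. -/
def zetaA (ks : List ℕ) : A :=
  Ideal.Quotient.mk nullIdeal (fun p => zetaSum p ks p)

/-- The finite multiple zeta-star value `ζ⋆_𝒜(k₁,…,k_n)`. -/
def zetaStarA (ks : List ℕ) : A :=
  Ideal.Quotient.mk nullIdeal (fun p => zetaStarSum p ks p)

/-- `ℋ¹ = ℚ⟨z₁,z₂,…⟩`, the noncommutative polynomial algebra on variables `z_k`, `k ≥ 1`. -/
abbrev H1 : Type := MonoidAlgebra ℚ (FreeMonoid ℕ+)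

/-- The monomial (word) `z_{k₁} ⋯ z_{k_n}` in `ℋ¹`. -/
noncomputable def word (w : List ℕ+) : H1 :=
  MonoidAlgebra.of ℚ (FreeMonoid ℕ+) (FreeMonoid.ofList w)

/-- Shuffle product on words (with values in `ℋ¹`). -/
noncomputable def shuffleW : List ℕ+ → List ℕ+ → H1
  | [], w => word w
  | v, [] => word v
  | k :: v, l :: w => word [k] * shuffleW v (l :: w) + word [l] * shuffleW (k :: v) w
  termination_by v w => v.length + w.length
  decreasing_by all_goals first | (simp; omega) | simp | omega

/-- The shuffle product `ш` on `ℋ¹`, as the bilinear extension of `shuffleW`. -/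
noncomputable def shuffle (x y : H1) : H1 :=
  Finsupp.sum x.coeff fun v c => Finsupp.sum y.coeff fun w c' =>
    (c * c') • shuffleW (FreeMonoid.toList v) (FreeMonoid.toList w)

/-- Harmonic product on words (with values in `ℋ¹`). -/
noncomputable def harmW : List ℕ+ → List ℕ+ → H1
  | [], w => word w
  | v, [] => word v
  | k :: v, l :: w =>
      word [k] * harmW v (l :: w) + word [l] * harmW (k :: v) w
        + word [k + l] * harmW v w
  termination_by v w => v.length + w.length
  decreasing_by all_goals first | (simp; omega) | simp | omega

/-- The harmonic product `*` on `ℋ¹`, as the bilinear extension of `harmW`. -/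
noncomputable def harm (x y : H1) : H1 :=
  Finsupp.sum x.coeff fun v c => Finsupp.sum y.coeff fun w c' =>
    (c * c') • harmW (FreeMonoid.toList v) (FreeMonoid.toList w)

/-- Star-harmonic product on words (with values in `ℋ¹`). -/
noncomputable def harmStarW : List ℕ+ → List ℕ+ → H1
  | [], w => word w
  | v, [] => word v
  | k :: v, l :: w =>
      word [k] * harmStarW v (l :: w) + word [l] * harmStarW (k :: v) w
        - word [k + l] * harmStarW v w
  termination_by v w => v.length + w.length
  decreasing_by all_goals first | (simp; omega) | simp | omega

/-- The product `∗̄` on `ℋ¹`, as the bilinear extension of `harmStarW`. -/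
noncomputable def harmStar (x y : H1) : H1 :=
  Finsupp.sum x.coeff fun v c => Finsupp.sum y.coeff fun w c' =>
    (c * c') • harmStarW (FreeMonoid.toList v) (FreeMonoid.toList w)

/-- The image of a rational number in `𝒜`. -/
def ratA (q : ℚ) : A :=
  Ideal.Quotient.mk nullIdeal (fun p => (q.num : ZMod p) * ((q.den : ZMod p))⁻¹)

/-- The `ℚ`-linear map `Z_𝒜 : ℋ¹ → 𝒜` sending `z_{k₁} ⋯ z_{k_n}` to `ζ_𝒜(k₁,…,k_n)`. -/
noncomputable def ZA (x : H1) : A :=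
  Finsupp.sum x.coeff fun w c => ratA c * zetaA ((FreeMonoid.toList w).map (fun k => (k : ℕ)))

/-- The `ℚ`-linear map `Z̄_𝒜 : ℋ¹ → 𝒜` sending `z_{k₁} ⋯ z_{k_n}` to `ζ⋆_𝒜(k₁,…,k_n)`. -/
noncomputable def ZSA (x : H1) : A :=
  Finsupp.sum x.coeff fun w c => ratA c * zetaStarA ((FreeMonoid.toList w).map (fun k => (k : ℕ)))

/-- Sum of a list of positive integers (equal to the actual sum for nonempty lists). -/
def psum : List ℕ+ → ℕ+
  | [] => 1
  | k :: t => t.foldl (· + ·) k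

/-- The map `d` on words: `d(z_{k₁}⋯z_{k_n}) = ∑_{m} ∑_{0=i₀<⋯<i_m=n}
`z_{k_{i₀+1}+⋯+k_{i₁}} ⋯ z_{k_{i_{m-1}+1}+⋯+k_{i_m}}`. -/
noncomputable def dW (w : List ℕ+) : H1 :=
  ∑ c : Composition w.length, word ((w.splitWrtComposition c).map psum)

/-- `z_a` for a tuple `a = (a₁,…,a_m; b₁,…,b_m; c₁,…,c_n) ∈ I_{m,n}`:
`∑_{σ,τ ∈ S_m} z_{a_{σ(1)}} z_{b_{τ(1)}} ⋯ z_{a_{σ(m)}} z_{b_{τ(m)}} ш z_{c₁} ш ⋯ ш z_{c_n}`. -/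
noncomputable def zTuple {m n : ℕ} (a b : Fin m → ℕ+) (c : Fin n → ℕ+) : H1 :=
  ∑ σ : Equiv.Perm (Fin m), ∑ τ : Equiv.Perm (Fin m),
    (List.ofFn c).foldl (fun w k => shuffle w (word [k]))
      (word ((List.ofFn (fun i => [a (σ i), b (τ i)])).flatten))

/-- The statement `P_{m,n}`: `Z_𝒜(z_a) = Z̄_𝒜(z_a) = 0` for all `a ∈ I_{m,n}`. -/
def Pmn (m n : ℕ) : Prop :=
  ∀ (a b : Fin m → ℕ+) (c : Fin n → ℕ+),
    (∀ i, Odd (a i : ℕ)) → (∀ i, Odd (b i : ℕ)) → (∀ j, Even (c j : ℕ)) →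
    ZA (zTuple a b c) = 0 ∧ ZSA (zTuple a b c) = 0

/-- The list `{c}^{n₀}, a, {c}^{n₁}, b, {c}^{n₂}, …, a, {c}^{n_{2m-1}}, b, {c}^{n_{2m}}`. -/
def bbList (a b c : ℕ) (m : ℕ) (f : Fin (2 * m + 1) → ℕ) : List ℕ :=
  (List.ofFn (fun j : Fin m =>
      List.replicate (f ⟨2 * j.val, by have := j.isLt; omega⟩) c ++ [a]
        ++ List.replicate (f ⟨2 * j.val + 1, by have := j.isLt; omega⟩) c ++ [b])).flatten
    ++ List.replicate (f ⟨2 * m, by omega⟩) c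

/-!
Summing over all orderings of the exponents turns the ordered sums over `p > m₁ > ⋯ > mₙ ≥ 1`
into one sum over all injective tuples `(m₁, …, mₙ)` in `[1, p)`. Splitting off `m₁` and
correcting for the collisions `m₁ = mⱼ` writes that sum as a polynomial in the power sums
`∑_{0<m<p} m^{-e}` with `0 < e ≤ k₁ + ⋯ + kₙ`, and these vanish modulo `p` once
`k₁ + ⋯ + kₙ < p - 1`.
-/

open Finset

theorem Fin.insertNth_injective_iff {α : Type*} {n : ℕ} {p : Fin (n + 1)} {a : α}
    {f : Fin n → α} :
    Function.Injective (p.insertNth a f) ↔ a ∉ Set.range f ∧ Function.Injective f := by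
  have h : (p.insertNth a f : Fin (n + 1) → α) = Fin.cons a f ∘ p.cycleRange := by
    ext j
    simp
  rw [h, Function.Injective.of_comp_iff' _ p.cycleRange.bijective, Fin.cons_injective_iff]

section InjectiveTuples

variable {α : Type*} [DecidableEq α]

def injTuples (s : Finset α) (n : ℕ) : Finset (Fin n → α) :=
  (Fintype.piFinset fun _ => s).filter Function.Injective

theorem mem_injTuples {s : Finset α} {n : ℕ} {f : Fin n → α} :
    f ∈ injTuples s n ↔ (∀ i, f i ∈ s) ∧ Function.Injective f := by
  simp [injTuples]

theorem insertNth_mem_injTuples {s : Finset α} {n : ℕ} {p : Fin (n + 1)} {a : α}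
    {f : Fin n → α} :
    p.insertNth a f ∈ injTuples s (n + 1) ↔ a ∈ s ∧ a ∉ Set.range f ∧ f ∈ injTuples s n := by
  simp only [mem_injTuples, Fin.insertNth_injective_iff, Fin.forall_iff_succAbove p,
    Fin.insertNth_apply_same, Fin.insertNth_apply_succAbove]
  tauto

theorem injTuples_zero (s : Finset α) : injTuples s 0 = {Fin.elim0} := by
  ext f
  simp [mem_injTuples, Subsingleton.elim f Fin.elim0, Function.injective_of_subsingleton]

theorem injTuples_empty (n : ℕ) : injTuples (∅ : Finset α) (n + 1) = ∅ := by
  ext f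
  simp [mem_injTuples]

variable {M : Type*} [AddCommMonoid M]

theorem sum_injTuples_succ (s : Finset α) (n : ℕ) (P : (Fin (n + 1) → α) → M) :
    ∑ f ∈ injTuples s (n + 1), P f
      = ∑ g ∈ injTuples s n, ∑ a ∈ s \ univ.image g, P (Fin.cons a g) := by
  rw [sum_sigma']
  refine sum_nbij' (fun f => ⟨Fin.tail f, f 0⟩) (fun x => Fin.cons x.2 x.1) ?_ ?_ ?_ ?_ ?_
  · intro f hf
    rw [← Fin.cons_self_tail f, ← Fin.insertNth_zero', insertNth_mem_injTuples] at hf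
    simpa [Set.mem_range, hf.1, hf.2.2] using hf.2.1
  · rintro ⟨g, a⟩ h
    simp only [mem_sigma, mem_sdiff, mem_image, mem_univ, true_and] at h
    rw [← Fin.insertNth_zero', insertNth_mem_injTuples]
    exact ⟨h.2.1, h.2.2, h.1⟩
  · intro f _; simp
  · rintro ⟨g, a⟩ _; simp
  · intro f _; simp

theorem sum_injTuples_insert {s : Finset α} {a : α} (ha : a ∉ s) (n : ℕ)
    (P : (Fin (n + 1) → α) → M) :
    ∑ f ∈ injTuples (insert a s) (n + 1), P f
      = ∑ f ∈ injTuples s (n + 1), P f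
        + ∑ i : Fin (n + 1), ∑ g ∈ injTuples s n, P (i.insertNth a g) := by
  rw [← sum_filter_add_sum_filter_not _ (fun f => ∃ i, f i = a), add_comm]
  congr 1
  · refine sum_congr (ext fun f => ?_) fun _ _ => rfl
    simp only [mem_filter, mem_injTuples, mem_insert, not_exists]
    constructor
    · rintro ⟨⟨hs, hinj⟩, ha'⟩
      exact ⟨fun i => (hs i).resolve_left (ha' i), hinj⟩
    · rintro ⟨hs, hinj⟩
      exact ⟨⟨fun i => Or.inr (hs i), hinj⟩, fun i h => ha (h ▸ hs i)⟩
  · rw [← sum_product']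
    symm
    refine sum_bij (fun x _ => x.1.insertNth a x.2) ?_ ?_ ?_ fun _ _ => rfl
    · rintro ⟨i, g⟩ hg
      rw [mem_product, mem_injTuples] at hg
      refine mem_filter.2 ⟨insertNth_mem_injTuples.2 ⟨mem_insert_self a s, ?_, ?_⟩, i, by simp⟩
      · rintro ⟨j, hj⟩
        exact ha (hj ▸ hg.2.1 j)
      · exact mem_injTuples.2 ⟨fun j => mem_insert_of_mem (hg.2.1 j), hg.2.2⟩
    · rintro ⟨i, g⟩ - ⟨j, h⟩ hh hgh
      obtain rfl : i = j := by
        by_contra hij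
        obtain ⟨m, rfl⟩ := Fin.exists_succAbove_eq hij
        have hm := congrFun hgh (j.succAbove m)
        simp only [Fin.insertNth_apply_same, Fin.insertNth_apply_succAbove] at hm
        exact ha (hm ▸ (mem_injTuples.1 (mem_product.1 hh).2).1 m)
      obtain ⟨-, rfl⟩ := Fin.insertNth_inj.1 hgh
      rfl
    · intro f hf
      obtain ⟨hf, i, hi⟩ := mem_filter.1 hf
      refine ⟨(i, i.removeNth f), mem_product.2 ⟨mem_univ i, mem_injTuples.2 ⟨fun j => ?_, ?_⟩⟩, ?_⟩
      · have hne : f (i.succAbove j) ≠ a := hi ▸ (mem_injTuples.1 hf).2.ne (i.succAbove_ne j)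
        exact (mem_insert.1 ((mem_injTuples.1 hf).1 _)).resolve_left hne
      · exact (mem_injTuples.1 hf).2.comp Fin.succAbove_right_injective
      · simp [← hi]

end InjectiveTuples

theorem Finset.prod_pow_add_pi_single {ι M : Type*} [Fintype ι] [DecidableEq ι] [CommMonoid M]
    (y : ι → M) (e : ι → ℕ) (j : ι) (v : ℕ) :
    ∏ i, y i ^ (e + Pi.single j v : ι → ℕ) i = y j ^ v * ∏ i, y i ^ e i := by
  simp only [Pi.add_apply, pow_add, prod_mul_distrib, mul_comm (y j ^ v)]
  congr 1
  rw [prod_eq_single j (fun i _ hi => by simp [hi]) (by simp)]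
  simp

section PowerSums

variable {α R : Type*} [DecidableEq α] [CommRing R]

def injPowSum (s : Finset α) (x : α → R) {n : ℕ} (k : Fin n → ℕ) : R :=
  ∑ f ∈ injTuples s n, ∏ i, x (f i) ^ k i

theorem injPowSum_zero (s : Finset α) (x : α → R) (k : Fin 0 → ℕ) : injPowSum s x k = 1 := by
  simp [injPowSum, injTuples_zero]

theorem injPowSum_empty (x : α → R) {n : ℕ} (k : Fin (n + 1) → ℕ) :
    injPowSum ∅ x k = 0 := by
  simp [injPowSum, injTuples_empty]

theorem injPowSum_insert {s : Finset α} {a : α} (ha : a ∉ s) (x : α → R) {n : ℕ}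
    (k : Fin (n + 1) → ℕ) :
    injPowSum (insert a s) x k
      = injPowSum s x k + ∑ i, x a ^ k i * injPowSum s x (k ∘ i.succAbove) := by
  simp only [injPowSum, sum_injTuples_insert ha, mul_sum]
  congr 1
  refine sum_congr rfl fun i _ => sum_congr rfl fun g _ => ?_
  rw [Fin.prod_univ_succAbove _ i]
  simp

theorem injPowSum_succ (s : Finset α) (x : α → R) {n : ℕ} (k : Fin (n + 1) → ℕ) :
    injPowSum s x k = (∑ a ∈ s, x a ^ k 0) * injPowSum s x (Fin.tail k)
      - ∑ j, injPowSum s x (Fin.tail k + Pi.single j (k 0)) := by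
  simp only [injPowSum, sum_injTuples_succ, mul_sum, sum_comm (s := univ (α := Fin n)),
    ← sum_sub_distrib]
  refine sum_congr rfl fun g hg => ?_
  have hgs : univ.image g ⊆ s := by
    intro a ha
    obtain ⟨j, -, rfl⟩ := mem_image.1 ha
    exact (mem_injTuples.1 hg).1 j
  simp only [Fin.prod_univ_succ, Fin.cons_zero, Fin.cons_succ, prod_pow_add_pi_single]
  rw [← sum_mul, sum_sdiff_eq_sub hgs, sum_image fun i _ j _ h => (mem_injTuples.1 hg).2 h,
    sub_mul]
  simp only [Fin.tail, sum_mul]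

theorem injPowSum_eq_zero {s : Finset α} {x : α → R} {N : ℕ}
    (hx : ∀ e, 0 < e → e ≤ N → ∑ a ∈ s, x a ^ e = 0) :
    ∀ {n : ℕ} (k : Fin (n + 1) → ℕ), (∀ i, 0 < k i) → ∑ i, k i ≤ N → injPowSum s x k = 0
  | 0, k, hk, hN => by
    rw [injPowSum_succ, hx (k 0) (hk 0) (by simpa using hN)]
    simp
  | n + 1, k, hk, hN => by
    rw [Fin.sum_univ_succ] at hN
    have hkj (j : Fin (n + 1)) : injPowSum s x (Fin.tail k + Pi.single j (k 0)) = 0 := by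
      refine injPowSum_eq_zero hx _ (fun i => (hk i.succ).trans_le (Nat.le_add_right _ _)) ?_
      simp only [Pi.add_apply, sum_add_distrib, Fintype.sum_pi_single', Fin.tail]
      omega
    rw [injPowSum_succ, injPowSum_eq_zero hx (Fin.tail k) (fun i => hk i.succ) (by
      simp only [Fin.tail]; omega)]
    simp [hkj]

end PowerSums

theorem ZMod.sum_Ico_one_inv_pow_eq_zero {p : ℕ} [Fact p.Prime] {e : ℕ} (he₀ : 0 < e)
    (he : e < p - 1) : ∑ m ∈ Ico 1 p, ((m : ZMod p)⁻¹) ^ e = 0 :=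
  calc ∑ m ∈ Ico 1 p, ((m : ZMod p)⁻¹) ^ e = ∑ m ∈ range p, ((m : ZMod p)⁻¹) ^ e := by
        rw [range_eq_Ico, sum_eq_sum_Ico_succ_bot (Fact.out : p.Prime).pos]
        simp [he₀.ne']
    _ = ∑ x : ZMod p, x⁻¹ ^ e :=
        sum_nbij' Nat.cast ZMod.val (by simp) (by simp [ZMod.val_lt])
          (fun _ hm => ZMod.val_cast_of_lt (mem_range.1 hm)) (fun x _ => ZMod.natCast_zmod_val x)
          fun _ _ => rfl
    _ = ∑ x : ZMod p, x ^ e := Fintype.sum_bijective _ inv_involutive.bijective _ _ fun _ => rfl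
    _ = 0 := FiniteField.sum_pow_lt_card_sub_one _ e (by rwa [ZMod.card])

/-- A permutation `σ` of `Fin (n + 1)` is determined by `i = σ 0` together with the permutation
`τ` of `Fin n` such that `σ j.succ = i.succAbove (τ j)`. -/
theorem Equiv.Perm.sum_fin_succ {M : Type*} [AddCommMonoid M] {n : ℕ}
    (g : Equiv.Perm (Fin (n + 1)) → M) :
    ∑ σ, g σ = ∑ i : Fin (n + 1), ∑ τ : Perm (Fin n),
      g (i.cycleRange.symm * decomposeFin.symm (0, τ)) := by
  rw [← Fintype.sum_prod_type' fun (i : Fin (n + 1)) τ =>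
    g (i.cycleRange.symm * decomposeFin.symm (0, τ))]
  refine (Fintype.sum_bijective (fun x : Fin (n + 1) × Perm (Fin n) =>
    x.1.cycleRange.symm * decomposeFin.symm (0, x.2)) ?_ _ g fun _ => rfl).symm
  refine (Fintype.bijective_iff_injective_and_card _).2 ⟨?_, Fintype.card_congr decomposeFin.symm⟩
  rintro ⟨i, τ⟩ ⟨j, υ⟩ h
  obtain rfl : i = j := by simpa using congr($h 0)
  simpa using h

theorem zetaSum_cons_succ (p k : ℕ) (ks : List ℕ) {b : ℕ} (hb : b ≠ 0) :
    zetaSum p (k :: ks) (b + 1)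
      = zetaSum p (k :: ks) b + ((b : ZMod p)⁻¹) ^ k * zetaSum p ks b := by
  simp only [zetaSum]
  rw [sum_Ico_succ_top (Nat.one_le_iff_ne_zero.2 hb)]

theorem sum_perm_zetaSum_eq_injPowSum (p b : ℕ) {n : ℕ} (k : Fin n → ℕ) :
    ∑ σ : Equiv.Perm (Fin n), zetaSum p (List.ofFn fun i => k (σ i)) b
      = injPowSum (Ico 1 b) (fun m => (m : ZMod p)⁻¹) k := by
  induction b generalizing n with
  | zero => rcases n with _ | n <;> simp [zetaSum, injPowSum_zero, injPowSum_empty]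
  | succ b ih =>
    rcases n with _ | n
    · simp [zetaSum, injPowSum_zero]
    rcases eq_or_ne b 0 with rfl | hb
    · simp [zetaSum, injPowSum_empty]
    rw [Nat.Ico_succ_right_eq_insert_Ico (Nat.one_le_iff_ne_zero.2 hb),
      injPowSum_insert (by simp), ← ih]
    simp_rw [List.ofFn_succ, zetaSum_cons_succ p _ _ hb, sum_add_distrib]
    congr 1
    rw [Equiv.Perm.sum_fin_succ]
    refine sum_congr rfl fun i _ => ?_
    rw [← ih, mul_sum]
    simp

theorem mk_nullIdeal_eq_zero_of_forall_lt {f : PreA} (N : ℕ)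
    (h : ∀ p : Nat.Primes, N < p → f p = 0) : Ideal.Quotient.mk nullIdeal f = 0 := by
  refine Ideal.Quotient.eq_zero_iff_mem.2 <|
    ((Set.finite_Iic N).preimage Subtype.val_injective.injOn).subset fun p hp => ?_
  by_contra hpN
  exact hp (h p (not_le.1 hpN))

/-- The sum of `ζ_𝒜` over all permutations of the exponents vanishes. -/
theorem sum_perm_zetaA (n : ℕ) (hn : 1 ≤ n) (k : Fin n → ℕ) (hk : ∀ i, 0 < k i) :
    ∑ σ : Equiv.Perm (Fin n), zetaA (List.ofFn (fun i => k (σ i))) = 0 := by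
  obtain ⟨n, rfl⟩ := Nat.exists_eq_add_of_le' hn
  simp only [zetaA, ← map_sum]
  refine mk_nullIdeal_eq_zero_of_forall_lt (∑ i, k i + 1) fun p hp => ?_
  have : Fact (p : ℕ).Prime := ⟨p.prop⟩
  rw [Finset.sum_apply, sum_perm_zetaSum_eq_injPowSum]
  exact injPowSum_eq_zero (N := p - 2)
    (fun e he₀ he => ZMod.sum_Ico_one_inv_pow_eq_zero he₀ (by omega)) k hk (by omega)
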